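/- arXiv:1806.06930 — 3 statements merged into one kernel-verified Lean document; each statement's English description precedes it below -/
import Mathlib

section
/- Let Γ(ε) (ε > 0) and Γ be positive bounded linear operators on a Hilbert space X such that ‖Γ(ε)h − Γh‖ → 0 as ε → 0⁺ for every h ∈ X. Then for every sequence εₙ > 0 with εₙ → 0 as n → ∞, the operator norms satisfy ‖εₙ(εₙI + Γ(εₙ))⁻¹ π_M‖ → 0 as n → ∞. -/
open scoped RealInnerProductSpace
open Filter MeasureTheory

/-- The orthogonal projection of `X` onto the subspace `M`, as a continuous linear map
`X →L[ℝ] X`. -/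
noncomputable def finProj {X : Type*} [NormedAddCommGroup X] [InnerProductSpace ℝ X]
    (M : Submodule ℝ X) [CompleteSpace M] : X →L[ℝ] X :=
  M.subtypeL ∘L M.orthogonalProjectionOnto

/-!
Positivity of `Γ(ε)` makes each `εR(ε)`, `R(ε) = (ε + Γ(ε))⁻¹`, a contraction. On the range of
`Γ₀` these contractions tend to zero strongly, because
`εR(ε)Γ₀g = εR(ε)(Γ₀g - Γ(ε)g) + ε(g - εR(ε)g)`, and that range is dense since `Γ₀` is positive;
a bounded, hence equicontinuous, family converging on a dense set converges everywhere. Composed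
with the finite-rank projection `π_M`, strong convergence becomes convergence in norm.
-/

theorem tendsto_apply_zero_of_denseRange {𝕜 E F G ι : Type*} [NontriviallyNormedField 𝕜]
    [NormedAddCommGroup E] [NormedSpace 𝕜 E] [NormedAddCommGroup F] [NormedSpace 𝕜 F]
    {l : Filter ι} {T : ι → E →L[𝕜] F} {C : ℝ} (hT : ∀ i, ‖T i‖ ≤ C) {S : G → E}
    (hS : DenseRange S) (h : ∀ g, Tendsto (fun i => T i (S g)) l (nhds 0)) (x : E) :
    Tendsto (fun i => T i x) l (nhds 0) := by
  have hequi : Equicontinuous ((↑) ∘ T) := ((NormedSpace.equicontinuous_TFAE T).out 5 1).mp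
    (show ∃ C, ∀ i, ‖T i‖ ≤ C from ⟨C, hT⟩)
  exact hS.induction_on x (hequi.isClosed_setOfPred_tendsto continuous_const) h

theorem Module.Basis.tendsto_zero_of_tendsto_apply {𝕜 E F ι α : Type*}
    [NontriviallyNormedField 𝕜] [CompleteSpace 𝕜] [NormedAddCommGroup E] [NormedSpace 𝕜 E]
    [NormedAddCommGroup F] [NormedSpace 𝕜 F] [Fintype ι] (v : Basis ι 𝕜 E) {l : Filter α}
    {u : α → E →L[𝕜] F}
    (h : ∀ i, Tendsto (fun a => u a (v i)) l (nhds 0)) : Tendsto u l (nhds 0) := by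
  obtain ⟨C, -, hC⟩ := v.exists_opNorm_le (F := F)
  refine squeeze_zero_norm (fun a => hC (Finset.sum_nonneg fun i _ => norm_nonneg (u a (v i)))
    fun i => Finset.single_le_sum (fun j _ => norm_nonneg (u a (v j))) (Finset.mem_univ i)) ?_
  simpa using (tendsto_finsetSum _ fun i _ => (h i).norm).const_mul C

section

variable {X : Type*} [NormedAddCommGroup X] [InnerProductSpace ℝ X]

theorem denseRange_of_inner_map_self_pos [CompleteSpace X] {T : X →L[ℝ] X}
    (hT : ∀ x, x ≠ 0 → 0 < ⟪T x, x⟫) : DenseRange T := by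
  change Dense (LinearMap.range (T : X →ₗ[ℝ] X) : Set X)
  rw [Submodule.dense_iff_topologicalClosure_eq_top, Submodule.topologicalClosure_eq_top_iff,
    Submodule.eq_bot_iff]
  intro x hx
  by_contra hx0
  exact (hT x hx0).ne' ((Submodule.mem_orthogonal _ _).1 hx (T x) ⟨x, rfl⟩)

theorem norm_smul_le_one_of_comp_eq_one {A R : X →L[ℝ] X} {ε : ℝ} (hε : 0 < ε)
    (hA : ∀ x, 0 ≤ ⟪A x, x⟫) (hR : (ε • (1 : X →L[ℝ] X) + A) ∘L R = 1) : ‖ε • R‖ ≤ 1 := by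
  refine ContinuousLinearMap.opNorm_le_bound _ zero_le_one fun y => ?_
  set x := R y
  have hy : ε • x + A x = y := by simpa using congrArg (· y) hR
  have hcoercive : ε * ‖x‖ ^ 2 ≤ ‖y‖ * ‖x‖ :=
    calc ε * ‖x‖ ^ 2 ≤ ⟪ε • x + A x, x⟫ := by
          rw [inner_add_left, real_inner_smul_left, real_inner_self_eq_norm_sq]
          linarith [hA x]
      _ ≤ ‖y‖ * ‖x‖ := hy ▸ real_inner_le_norm _ _
  rw [smul_apply, norm_smul, Real.norm_of_nonneg hε.le, one_mul]
  rcases (norm_nonneg x).eq_or_lt with hx | hx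
  · rw [← hx, mul_zero]
    exact norm_nonneg y
  · nlinarith

theorem tendsto_smul_apply_of_comp_eq_one {ι : Type*} {l : Filter ι} {e : ι → ℝ}
    {A R : ι → X →L[ℝ] X} (he : Tendsto e l (nhds 0))
    (hR : ∀ i, R i ∘L (e i • (1 : X →L[ℝ] X) + A i) = 1) (hbound : ∀ i, ‖e i • R i‖ ≤ 1)
    {g h : X} (hA : Tendsto (fun i => A i g) l (nhds h)) :
    Tendsto (fun i => (e i • R i) h) l (nhds 0) := by
  have hsplit : ∀ i, (e i • R i) h = (e i • R i) (h - A i g) + e i • (g - (e i • R i) g) := by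
    intro i
    have hRA : R i (A i g) = g - e i • R i g := by
      simpa [eq_sub_iff_add_eq'] using congrArg (· g) (hR i)
    simp only [smul_apply, map_sub, hRA]
    module
  have hcontract : ∀ i x, ‖(e i • R i) x‖ ≤ ‖x‖ := fun i x => by
    simpa using (e i • R i).le_of_opNorm_le (hbound i) x
  have hfirst : Tendsto (fun i => (e i • R i) (h - A i g)) l (nhds 0) :=
    squeeze_zero_norm (fun i => hcontract i _)
      (tendsto_iff_norm_sub_tendsto_zero.mp hA |>.congr fun i => norm_sub_rev _ _)
  have hsecond : Tendsto (fun i => e i • (g - (e i • R i) g)) l (nhds 0) := by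
    refine he.zero_smul_isBoundedUnder_le ⟨2 * ‖g‖, eventually_map.2 (Eventually.of_forall
      fun i => ?_)⟩
    calc ‖g - (e i • R i) g‖ ≤ ‖g‖ + ‖g‖ := (norm_sub_le _ _).trans (by gcongr; exact hcontract i g)
      _ = 2 * ‖g‖ := by ring
  simpa [hsplit] using hfirst.add hsecond

end

theorem tendsto_norm_comp_finProj {X F α : Type*} [NormedAddCommGroup X] [InnerProductSpace ℝ X]
    [NormedAddCommGroup F] [NormedSpace ℝ F] (M : Submodule ℝ X) [FiniteDimensional ℝ M]
    {l : Filter α} {u : α → X →L[ℝ] F} (h : ∀ x, Tendsto (fun a => u a x) l (nhds 0)) :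
    Tendsto (fun a => ‖u a ∘L finProj M‖) l (nhds 0) := by
  have hM : Tendsto (fun a => u a ∘L M.subtypeL) l (nhds 0) :=
    (Module.finBasis ℝ M).tendsto_zero_of_tendsto_apply fun i => h _
  refine squeeze_zero (fun _ => norm_nonneg _) (fun a => ?_)
    ((tendsto_zero_iff_norm_tendsto_zero (E := M →L[ℝ] F)).1 hM)
  calc ‖u a ∘L finProj M‖ = ‖(u a ∘L M.subtypeL) ∘L M.orthogonalProjectionOnto‖ := rfl
    _ ≤ ‖u a ∘L M.subtypeL‖ * ‖M.orthogonalProjectionOnto‖ :=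
      ContinuousLinearMap.opNorm_comp_le _ _
    _ ≤ ‖u a ∘L M.subtypeL‖ := mul_le_of_le_one_right
      (ContinuousLinearMap.opNorm_nonneg _) M.orthogonalProjectionOnto_norm_le

theorem finite_approx_resolvent_tendsto_zero_general
    {X : Type*} [NormedAddCommGroup X] [InnerProductSpace ℝ X] [CompleteSpace X]
    (M : Submodule ℝ X) [FiniteDimensional ℝ M]
    (Γ : ℝ → (X →L[ℝ] X)) (Γ₀ : X →L[ℝ] X)
    (hΓpos : ∀ ε > (0 : ℝ), ∀ x : X, x ≠ 0 → 0 < ⟪Γ ε x, x⟫)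
    (hΓ₀pos : ∀ x : X, x ≠ 0 → 0 < ⟪Γ₀ x, x⟫)
    (hconv : ∀ h : X,
      Tendsto (fun ε => ‖Γ ε h - Γ₀ h‖) (nhdsWithin 0 (Set.Ioi 0)) (nhds 0))
    (R : ℝ → (X →L[ℝ] X))
    (hR : ∀ ε > (0 : ℝ),
      R ε ∘L (ε • (1 : X →L[ℝ] X) + Γ ε) = 1 ∧ (ε • (1 : X →L[ℝ] X) + Γ ε) ∘L R ε = 1)
    (e : ℕ → ℝ) (he : ∀ n, 0 < e n) (helim : Tendsto e atTop (nhds 0)) :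
    Tendsto (fun n => ‖(e n) • (R (e n) ∘L finProj M)‖) atTop (nhds 0) := by
  have hnonneg : ∀ ε > (0 : ℝ), ∀ x, 0 ≤ ⟪Γ ε x, x⟫ := fun ε hε x => by
    rcases eq_or_ne x 0 with rfl | hx
    · simp
    · exact (hΓpos ε hε x hx).le
  have he' : Tendsto e atTop (nhdsWithin 0 (Set.Ioi 0)) :=
    tendsto_nhdsWithin_iff.2 ⟨helim, .of_forall he⟩
  have hbound : ∀ n, ‖e n • R (e n)‖ ≤ 1 := fun n =>
    norm_smul_le_one_of_comp_eq_one (he n) (hnonneg _ (he n)) (hR _ (he n)).2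
  have hrange : ∀ g, Tendsto (fun n => (e n • R (e n)) (Γ₀ g)) atTop (nhds 0) := fun g =>
    tendsto_smul_apply_of_comp_eq_one helim (fun n => (hR _ (he n)).1) hbound
      (tendsto_iff_norm_sub_tendsto_zero.2 ((hconv g).comp he'))
  have hpointwise := tendsto_apply_zero_of_denseRange hbound
    (denseRange_of_inner_map_self_pos hΓ₀pos) hrange
  simpa only [ContinuousLinearMap.smul_comp] using tendsto_norm_comp_finProj M hpointwise

/-- Let `Γ(ε)` (`ε > 0`) and `Γ` be positive bounded linear operators on a
Hilbert space `X` such that `‖Γ(ε)h − Γh‖ → 0` as `ε → 0⁺` for every `h ∈ X`. Then for every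
sequence `εₙ > 0` with `εₙ → 0`, the operator norms `‖εₙ(εₙI + Γ(εₙ))⁻¹ π_M‖ → 0`. -/
theorem finite_approx_resolvent_tendsto_zero
    {X : Type*} [NormedAddCommGroup X] [InnerProductSpace ℝ X] [CompleteSpace X]
    (M : Submodule ℝ X) [FiniteDimensional ℝ M]
    (Γ : ℝ → (X →L[ℝ] X)) (Γ₀ : X →L[ℝ] X)
    (hΓsa : ∀ ε > (0 : ℝ), IsSelfAdjoint (Γ ε))
    (hΓpos : ∀ ε > (0 : ℝ), ∀ x : X, x ≠ 0 → 0 < ⟪Γ ε x, x⟫)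
    (hΓ₀sa : IsSelfAdjoint Γ₀)
    (hΓ₀pos : ∀ x : X, x ≠ 0 → 0 < ⟪Γ₀ x, x⟫)
    (hconv : ∀ h : X,
      Tendsto (fun ε => ‖Γ ε h - Γ₀ h‖) (nhdsWithin 0 (Set.Ioi 0)) (nhds 0))
    (R : ℝ → (X →L[ℝ] X))
    (hR : ∀ ε > (0 : ℝ),
      R ε ∘L (ε • (1 : X →L[ℝ] X) + Γ ε) = 1 ∧ (ε • (1 : X →L[ℝ] X) + Γ ε) ∘L R ε = 1)
    (e : ℕ → ℝ) (he : ∀ n, 0 < e n) (helim : Tendsto e atTop (nhds 0)) :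
    Tendsto (fun n => ‖(e n) • (R (e n) ∘L finProj M)‖) atTop (nhds 0) :=
  finite_approx_resolvent_tendsto_zero_general M Γ Γ₀ hΓpos hΓ₀pos hconv R hR e he helim
end

section
/- Let Γ be a positive bounded linear operator on a Hilbert space X and ε > 0. Then for every h ∈ X, ‖ε(ε(I − π_M) + Γ)⁻¹h‖ ≤ (1 − ‖ε(εI + Γ)⁻¹π_M‖)⁻¹ ‖ε(εI + Γ)⁻¹h‖ (the denominator being positive since ‖ε(εI + Γ)⁻¹π_M‖ < 1). -/
/-!
Positivity of `Γ` gives `‖ε z‖ < ‖(εI + Γ) z‖` for `z ≠ 0`, so `ε(εI + Γ)⁻¹` shrinks every nonzero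
vector. On the compact unit sphere of the finite-dimensional `M` this becomes a uniform bound,
whence `T := ε(εI + Γ)⁻¹π_M` has norm `< 1`. The resolvent identity
`R₂ = R₁ + R₁ (επ_M) R₂` says that `u := εR₂h` solves `u = εR₁h + T u`, and then
`‖u‖ ≤ ‖εR₁h‖ + ‖T‖ ‖u‖`.
-/

open scoped RealInnerProductSpace
open Filter

theorem eq_add_mul_sub_mul_of_mul_eq_one {R : Type*} [Ring R] {a b x y : R}
    (hx : x * a = 1) (hy : b * y = 1) : y = x + x * (a - b) * y := by
  rw [mul_sub, sub_mul, mul_assoc x b y, hy, hx, one_mul, mul_one, add_sub_cancel]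

theorem norm_le_of_eq_add_apply {𝕜 E : Type*} [NontriviallyNormedField 𝕜]
    [SeminormedAddCommGroup E] [NormedSpace 𝕜 E] {T : E →L[𝕜] E} (hT : ‖T‖ < 1)
    {u v : E} (huv : u = v + T u) : ‖u‖ ≤ (1 - ‖T‖)⁻¹ * ‖v‖ := by
  have hu : ‖u‖ ≤ ‖v‖ + ‖T‖ * ‖u‖ :=
    calc ‖u‖ = ‖v + T u‖ := congrArg norm huv
      _ ≤ ‖v‖ + ‖T u‖ := norm_add_le _ _
      _ ≤ ‖v‖ + ‖T‖ * ‖u‖ := by gcongr; exact T.le_opNorm u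
  rw [inv_mul_eq_div, le_div_iff₀ (sub_pos.2 hT)]
  linarith

theorem ContinuousLinearMap.opNorm_lt_one_of_norm_apply_lt {E F : Type*}
    [NormedAddCommGroup E] [NormedSpace ℝ E] [FiniteDimensional ℝ E]
    [SeminormedAddCommGroup F] [NormedSpace ℝ F] (f : E →L[ℝ] F)
    (hf : ∀ x, x ≠ 0 → ‖f x‖ < ‖x‖) : ‖f‖ < 1 := by
  cases subsingleton_or_nontrivial E
  · simp [Subsingleton.elim f 0]
  obtain ⟨x₀, hx₀, hmax⟩ := (isCompact_sphere (0 : E) 1).exists_isMaxOn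
    (NormedSpace.sphere_nonempty.2 zero_le_one) (f.continuous.norm.continuousOn)
  have hx₀ : ‖x₀‖ = 1 := mem_sphere_zero_iff_norm.1 hx₀
  calc ‖f‖ ≤ ‖f x₀‖ := f.opNorm_le_of_unit_norm (norm_nonneg _)
        fun x hx => hmax (mem_sphere_zero_iff_norm.2 hx)
    _ < 1 := hx₀ ▸ hf x₀ (norm_ne_zero_iff.1 (by simp [hx₀]))

theorem norm_smul_lt_norm_smul_add {X : Type*} [NormedAddCommGroup X] [InnerProductSpace ℝ X]
    {ε : ℝ} (hε : 0 < ε) {z w : X} (hzw : 0 < ⟪w, z⟫) : ‖ε • z‖ < ‖ε • z + w‖ := by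
  have hinner : ⟪ε • z, w⟫ = ε * ⟪w, z⟫ := by rw [real_inner_smul_left, real_inner_comm]
  have hsq : ‖ε • z‖ ^ 2 < ‖ε • z + w‖ ^ 2 := by
    rw [norm_add_sq_real, hinner]
    nlinarith [sq_nonneg ‖w‖, mul_pos hε hzw]
  exact lt_of_pow_lt_pow_left₀ 2 (norm_nonneg _) hsq

theorem norm_smul_apply_lt_of_comp_eq_one {X : Type*} [NormedAddCommGroup X]
    [InnerProductSpace ℝ X] {Γ R : X →L[ℝ] X} (hΓ : ∀ x : X, x ≠ 0 → 0 < ⟪Γ x, x⟫)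
    {ε : ℝ} (hε : 0 < ε) (hR : (ε • (1 : X →L[ℝ] X) + Γ) ∘L R = 1) {y : X} (hy : y ≠ 0) :
    ‖ε • R y‖ < ‖y‖ := by
  have hRy : ε • R y + Γ (R y) = y := by simpa using congr($hR y)
  have hRy0 : R y ≠ 0 := fun h => hy (by simpa [h] using hRy.symm)
  simpa [hRy] using norm_smul_lt_norm_smul_add hε (hΓ _ hRy0)

theorem norm_comp_finProj_lt_one {X : Type*} [NormedAddCommGroup X] [InnerProductSpace ℝ X]
    (M : Submodule ℝ X) [FiniteDimensional ℝ M] {T : X →L[ℝ] X}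
    (hT : ∀ y ∈ M, y ≠ 0 → ‖T y‖ < ‖y‖) : ‖T ∘L finProj M‖ < 1 :=
  calc ‖T ∘L finProj M‖ = ‖(T ∘L M.subtypeL) ∘L M.orthogonalProjectionOnto‖ := rfl
    _ ≤ ‖T ∘L M.subtypeL‖ * ‖M.orthogonalProjectionOnto‖ := ContinuousLinearMap.opNorm_comp_le _ _
    _ ≤ ‖T ∘L M.subtypeL‖ := mul_le_of_le_one_right (ContinuousLinearMap.opNorm_nonneg _)
        M.orthogonalProjectionOnto_norm_le
    _ < 1 := (T ∘L M.subtypeL).opNorm_lt_one_of_norm_apply_lt fun y hy =>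
        hT y y.2 (by simpa using hy)

theorem resolvent_like_norm_bound_general
    {X : Type*} [NormedAddCommGroup X] [InnerProductSpace ℝ X]
    (M : Submodule ℝ X) [FiniteDimensional ℝ M]
    (Γ : X →L[ℝ] X)
    (hΓpos : ∀ x : X, x ≠ 0 → 0 < ⟪Γ x, x⟫)
    (ε : ℝ) (hε : 0 < ε)
    (R₁ : X →L[ℝ] X)
    (hR₁ : R₁ ∘L (ε • (1 : X →L[ℝ] X) + Γ) = 1 ∧ (ε • (1 : X →L[ℝ] X) + Γ) ∘L R₁ = 1)
    (R₂ : X →L[ℝ] X)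
    (hR₂ : R₂ ∘L (ε • ((1 : X →L[ℝ] X) - finProj M) + Γ) = 1 ∧
      (ε • ((1 : X →L[ℝ] X) - finProj M) + Γ) ∘L R₂ = 1) :
    ‖ε • (R₁ ∘L finProj M)‖ < 1 ∧
    ∀ h : X, ‖ε • R₂ h‖ ≤ (1 - ‖ε • (R₁ ∘L finProj M)‖)⁻¹ * ‖ε • R₁ h‖ := by
  have hnorm : ‖ε • (R₁ ∘L finProj M)‖ < 1 := by
    rw [← ContinuousLinearMap.smul_comp]
    exact norm_comp_finProj_lt_one M fun y _ hy =>
      norm_smul_apply_lt_of_comp_eq_one hΓpos hε hR₁.2 hy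
  refine ⟨hnorm, fun h => norm_le_of_eq_add_apply hnorm ?_⟩
  have hres := eq_add_mul_sub_mul_of_mul_eq_one hR₁.1 hR₂.2
  rw [show ε • (1 : X →L[ℝ] X) + Γ - (ε • (1 - finProj M) + Γ) = ε • finProj M by module] at hres
  conv_lhs => rw [hres]
  simp [smul_add]

/-- For a positive `Γ` and `ε > 0`: `‖ε(εI + Γ)⁻¹π_M‖ < 1` and for every
`h ∈ X`, `‖ε(ε(I − π_M) + Γ)⁻¹h‖ ≤ (1 − ‖ε(εI + Γ)⁻¹π_M‖)⁻¹ ‖ε(εI + Γ)⁻¹h‖`. -/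
theorem resolvent_like_norm_bound
    {X : Type*} [NormedAddCommGroup X] [InnerProductSpace ℝ X] [CompleteSpace X]
    (M : Submodule ℝ X) [FiniteDimensional ℝ M]
    (Γ : X →L[ℝ] X) (hΓsa : IsSelfAdjoint Γ)
    (hΓpos : ∀ x : X, x ≠ 0 → 0 < ⟪Γ x, x⟫)
    (ε : ℝ) (hε : 0 < ε)
    (R₁ : X →L[ℝ] X)
    (hR₁ : R₁ ∘L (ε • (1 : X →L[ℝ] X) + Γ) = 1 ∧ (ε • (1 : X →L[ℝ] X) + Γ) ∘L R₁ = 1)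
    (R₂ : X →L[ℝ] X)
    (hR₂ : R₂ ∘L (ε • ((1 : X →L[ℝ] X) - finProj M) + Γ) = 1 ∧
      (ε • ((1 : X →L[ℝ] X) - finProj M) + Γ) ∘L R₂ = 1) :
    ‖ε • (R₁ ∘L finProj M)‖ < 1 ∧
    ∀ h : X, ‖ε • R₂ h‖ ≤ (1 - ‖ε • (R₁ ∘L finProj M)‖)⁻¹ * ‖ε • R₁ h‖ :=
  resolvent_like_norm_bound_general M Γ hΓpos ε hε R₁ hR₁ R₂ hR₂
end

section
/- Assume the Gramian Γ₀ᵀ is positive. Fix ε > 0, x₀, h ∈ X, a finite-dimensional subspace M of X, let φ_min = −(ε(I − π_M) + Γ₀ᵀ)⁻¹(𝔘(T)x₀ − h), and define the control u_ε(s) = B*𝔘*(T−s)φ_min. Then the mild solution x_ε(T) = 𝔘(T)x₀ + ∫₀ᵀ 𝔘(T−s)Bu_ε(s) ds satisfies x_ε(T) − h = ε(I − π_M)(ε(I − π_M) + Γ₀ᵀ)⁻¹(𝔘(T)x₀ − h); in particular π_M x_ε(T) = π_M h and ‖x_ε(T) − h‖ ≤ ε‖(ε(I − π_M) + Γ₀ᵀ)⁻¹(𝔘(T)x₀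 − h)‖. -/
open scoped RealInnerProductSpace
open Filter MeasureTheory

/-!
The control `u_ε` is built so that its contribution to the final state is exactly `Γ φ_min`.
Writing `g = 𝔘(T)x₀ − h` and `A = ε(I − π_M)`, the identity `(A + Γ)R = I` gives
`Γ(Rg) = g − A(Rg)`, hence `x_ε(T) − h = g − Γ(Rg) = A(Rg)`. Since `A` takes values in `M^⊥`,
`π_M` kills `x_ε(T) − h`, and `‖(I − π_M)v‖ ≤ ‖v‖` gives the norm bound.
-/

section finProj

variable {X : Type*} [NormedAddCommGroup X] [InnerProductSpace ℝ X]
  (M : Submodule ℝ X) [CompleteSpace M]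

theorem finProj_eq_starProjection : finProj M = M.starProjection := rfl

theorem finProj_sub_finProj_self (v : X) : finProj M (v - finProj M v) = 0 := by
  rw [finProj_eq_starProjection, Submodule.starProjection_apply_eq_zero_iff]
  exact M.sub_starProjection_mem_orthogonal v

theorem norm_sub_finProj_le (v : X) : ‖v - finProj M v‖ ≤ ‖v‖ := by
  rw [finProj_eq_starProjection, ← Submodule.starProjection_orthogonal_val]
  exact Mᗮ.norm_starProjection_apply_le v

end finProj

theorem ContinuousLinearMap.apply_eq_sub_of_add_comp_eq_one {𝕜 E : Type*}
    [NontriviallyNormedField 𝕜] [NormedAddCommGroup E] [NormedSpace 𝕜 E] {A Γ R : E →L[𝕜] E}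
    (hR : (A + Γ) ∘L R = 1) (g : E) : Γ (R g) = g - A (R g) := by
  have hg : A (R g) + Γ (R g) = g := by
    simpa only [ContinuousLinearMap.comp_apply, add_apply, one_apply_eq_self] using
      DFunLike.congr_fun hR g
  exact eq_sub_of_add_eq' hg

theorem variational_control_final_state_general
    {X U : Type*} [NormedAddCommGroup X] [InnerProductSpace ℝ X] [CompleteSpace X]
    [NormedAddCommGroup U] [InnerProductSpace ℝ U] [CompleteSpace U]
    (𝔘 : ℝ → (X →L[ℝ] X))
    (B : U →L[ℝ] X) (T : ℝ)
    (Γ : X →L[ℝ] X)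
    (hΓ : ∀ x : X, Γ x = ∫ s in (0:ℝ)..T,
      (𝔘 (T - s)) (B (ContinuousLinearMap.adjoint B ((ContinuousLinearMap.adjoint (𝔘 (T - s))) x))))
    (M : Submodule ℝ X) [FiniteDimensional ℝ M]
    (ε : ℝ) (hε : 0 < ε) (x₀ h : X)
    (R : X →L[ℝ] X)
    (hR : R ∘L (ε • ((1 : X →L[ℝ] X) - finProj M) + Γ) = 1 ∧
      (ε • ((1 : X →L[ℝ] X) - finProj M) + Γ) ∘L R = 1)
    (φmin : X) (hφmin : φmin = -(R (𝔘 T x₀ - h)))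
    (uε : ℝ → U)
    (huε : ∀ s : ℝ, uε s = ContinuousLinearMap.adjoint B
      ((ContinuousLinearMap.adjoint (𝔘 (T - s))) φmin))
    (xT : X)
    (hxT : xT = 𝔘 T x₀ + ∫ s in (0:ℝ)..T, 𝔘 (T - s) (B (uε s))) :
    xT - h = ε • (R (𝔘 T x₀ - h) - finProj M (R (𝔘 T x₀ - h))) ∧
    finProj M xT = finProj M h ∧
    ‖xT - h‖ ≤ ε * ‖R (𝔘 T x₀ - h)‖ := by
  set g := 𝔘 T x₀ - h
  have hcontrol : ∫ s in (0:ℝ)..T, 𝔘 (T - s) (B (uε s)) = Γ φmin := by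
    rw [hΓ]; simp only [huε]
  have hΓR := ContinuousLinearMap.apply_eq_sub_of_add_comp_eq_one hR.2 g
  have hfinal : xT - h = ε • (R g - finProj M (R g)) := by
    rw [hxT, hcontrol, hφmin, map_neg, hΓR]
    simp only [smul_apply, sub_apply, one_apply_eq_self, g]
    abel
  refine ⟨hfinal, ?_, ?_⟩
  · rw [← sub_eq_zero, ← map_sub, hfinal, map_smul, finProj_sub_finProj_self, smul_zero]
  · rw [hfinal, norm_smul, Real.norm_of_nonneg hε.le]
    exact mul_le_mul_of_nonneg_left (norm_sub_finProj_le M _) hε.le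

/-- With `φ_min = −(ε(I − π_M) + Γ₀ᵀ)⁻¹(𝔘(T)x₀ − h)` and the control
`u_ε(s) = B*𝔘*(T−s)φ_min`, the final state `x_ε(T) = 𝔘(T)x₀ + ∫₀ᵀ 𝔘(T−s)Bu_ε(s) ds` satisfies
`x_ε(T) − h = ε(I − π_M)(ε(I − π_M) + Γ₀ᵀ)⁻¹(𝔘(T)x₀ − h)`; in particular
`π_M x_ε(T) = π_M h` and `‖x_ε(T) − h‖ ≤ ε‖(ε(I − π_M) + Γ₀ᵀ)⁻¹(𝔘(T)x₀ − h)‖`. -/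
theorem variational_control_final_state
    {X U : Type*} [NormedAddCommGroup X] [InnerProductSpace ℝ X] [CompleteSpace X]
    [TopologicalSpace.SeparableSpace X]
    [NormedAddCommGroup U] [InnerProductSpace ℝ U] [CompleteSpace U]
    [TopologicalSpace.SeparableSpace U]
    (𝔘 : ℝ → (X →L[ℝ] X))
    (h𝔘0 : 𝔘 0 = 1)
    (h𝔘add : ∀ s ≥ (0 : ℝ), ∀ t ≥ (0 : ℝ), 𝔘 (t + s) = 𝔘 t ∘L 𝔘 s)
    (h𝔘cont : ∀ x : X, ContinuousOn (fun t => 𝔘 t x) (Set.Ici 0))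
    (B : U →L[ℝ] X) (T : ℝ) (hT : 0 < T)
    (Γ : X →L[ℝ] X)
    (hΓ : ∀ x : X, Γ x = ∫ s in (0:ℝ)..T,
      (𝔘 (T - s)) (B (ContinuousLinearMap.adjoint B ((ContinuousLinearMap.adjoint (𝔘 (T - s))) x))))
    (hΓsa : IsSelfAdjoint Γ)
    (hΓpos : ∀ x : X, x ≠ 0 → 0 < ⟪Γ x, x⟫)
    (M : Submodule ℝ X) [FiniteDimensional ℝ M]
    (ε : ℝ) (hε : 0 < ε) (x₀ h : X)
    (R : X →L[ℝ] X)
    (hR : R ∘L (ε • ((1 : X →L[ℝ] X) - finProj M) + Γ) = 1 ∧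
      (ε • ((1 : X →L[ℝ] X) - finProj M) + Γ) ∘L R = 1)
    (φmin : X) (hφmin : φmin = -(R (𝔘 T x₀ - h)))
    (uε : ℝ → U)
    (huε : ∀ s : ℝ, uε s = ContinuousLinearMap.adjoint B
      ((ContinuousLinearMap.adjoint (𝔘 (T - s))) φmin))
    (xT : X)
    (hxT : xT = 𝔘 T x₀ + ∫ s in (0:ℝ)..T, 𝔘 (T - s) (B (uε s))) :
    xT - h = ε • (R (𝔘 T x₀ - h) - finProj M (R (𝔘 T x₀ - h))) ∧
    finProj M xT = finProj M h ∧
    ‖xT - h‖ ≤ ε * ‖R (𝔘 T x₀ - h)‖ :=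
  variational_control_final_state_general 𝔘 B T Γ hΓ M ε hε x₀ h R hR φmin hφmin uε huε xT hxT
end
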